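/- arXiv:2407.14436 — 2 statements merged into one kernel-verified Lean document; each statement's English description precedes it below -/
import Mathlib

section
/- Any player-1 strategy from a state s ∈ Win_2(G, F) that prevents every resulting play in the modified game G_{X,Y} (where states in X ∪ Y are made absorbing sinks) from visiting F must force a visit to X ∪ Y: there is no play starting at s consistent with the players' strategies that remains forever in Win_2(G, F) \ (F ∪ X ∪ Y). -/
/-! Along a play that stays in `Win₂(G, F) \ (F ∪ X ∪ Y)` the decoy sinks are never entered, so
every move is a move of `G`. In `G` the attractor rank of a non-target state strictly drops under
every player-1 action (a player-1 state enters the attractor only once all its successors are in)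
and under player 2's greedy action. The ranks along the play would then form a strictly decreasing
sequence in the well-order `ℕ∞`, which is impossible. -/

open scoped Classical
noncomputable section

variable {S A : Type*}

/-- Player-2 attractor level sets: `Z 0 = F`, `Z (k+1) = Z k ∪ Pre₁(Z k) ∪ Pre₂(Z k)`,
where `Pre₁` collects P1 states all of whose actions lead into `Z k`, and `Pre₂`
collects P2 states some action of which leads into `Z k`. -/
def lev (isP1 : S → Prop) (T : S → A → S) (F : Set S) : ℕ → Set S
  | 0 => F
  | n + 1 => lev isP1 T F n ∪
      {s | isP1 s ∧ ∀ a, T s a ∈ lev isP1 T F n} ∪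
      {s | ¬ isP1 s ∧ ∃ a, T s a ∈ lev isP1 T F n}

/-- Player-2 winning region (attractor of `F` for player 2). -/
def win2 (isP1 : S → Prop) (T : S → A → S) (F : Set S) : Set S :=
  ⋃ n, lev isP1 T F n

/-- Rank of a state: the minimal attractor level containing it (`⊤` if none). -/
def rank (isP1 : S → Prop) (T : S → A → S) (F : Set S) (s : S) : ℕ∞ :=
  ⨅ (n : ℕ) (_ : s ∈ lev isP1 T F n), (n : ℕ∞)

/-- Transition function of the true game `G_{X,Y}`: states in the decoy set
`D` are absorbing sinks; elsewhere the original transitions apply. -/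
def sinkT (T : S → A → S) (D : Set S) (s : S) (a : A) : S :=
  if s ∈ D then s else T s a

section Attractor

variable {isP1 : S → Prop} {T : S → A → S} {F : Set S} {s : S}

lemma lev_mono : Monotone (lev isP1 T F) :=
  monotone_nat_of_le_succ fun _ _ hx => Or.inl (Or.inl hx)

lemma rank_le_of_mem_lev {n : ℕ} (h : s ∈ lev isP1 T F n) : rank isP1 T F s ≤ n :=
  iInf₂_le n h

lemma lt_rank_of_notMem_lev {n : ℕ} (h : s ∉ lev isP1 T F n) : (n : ℕ∞) < rank isP1 T F s := by
  refine (ENat.add_one_le_iff (ENat.natCast_ne_top n)).mp (le_iInf₂ fun m hm => ?_)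
  have hnm : n < m := lt_of_not_ge fun hmn => h (lev_mono hmn hm)
  exact_mod_cast hnm

lemma rank_lt_of_isP1 (hs : s ∈ win2 isP1 T F) (hsF : s ∉ F) (hP1 : isP1 s) (a : A) :
    rank isP1 T F (T s a) < rank isP1 T F s := by
  have hex : ∃ n, s ∈ lev isP1 T F n := Set.mem_iUnion.mp hs
  obtain ⟨k, hk⟩ : ∃ k, Nat.find hex = k + 1 :=
    Nat.exists_eq_add_one_of_ne_zero fun h0 => hsF (by simpa only [h0, lev] using Nat.find_spec hex)
  have hnot : s ∉ lev isP1 T F k := Nat.find_min hex (by omega)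
  have hmem : s ∈ lev isP1 T F (k + 1) := hk ▸ Nat.find_spec hex
  rcases hmem with (hlev | ⟨-, hall⟩) | ⟨hP2, -⟩
  · exact absurd hlev hnot
  · exact (rank_le_of_mem_lev (hall a)).trans_lt (lt_rank_of_notMem_lev hnot)
  · exact absurd hP1 hP2

end Attractor

lemma not_forall_iterate_mem_of_lt {α β : Type*} [Preorder β] [WellFoundedLT β]
    {f : α → α} {r : α → β} {P : Set α} (hr : ∀ t ∈ P, r (f t) < r t) (s : α) :
    ¬ ∀ n, f^[n] s ∈ P := fun h =>
  not_strictAnti_of_wellFoundedLT (fun n => r (f^[n] s)) <| strictAnti_nat_of_succ_lt fun n => by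
    simpa only [Function.iterate_succ_apply'] using hr _ (h n)

theorem must_visit_decoys_general
    (isP1 : S → Prop) (T : S → A → S) (F X Y : Set S)
    (π₁ π₂ : S → A)
    (hgreedy : ∀ s, ¬ isP1 s → s ∈ win2 isP1 T F → s ∉ F →
      rank isP1 T F (T s (π₂ s)) < rank isP1 T F s)
    (s : S) :
    ¬ ∀ n, (fun t => sinkT T (X ∪ Y) t (if isP1 t then π₁ t else π₂ t))^[n] s
        ∈ win2 isP1 T F \ (F ∪ X ∪ Y) := by
  refine not_forall_iterate_mem_of_lt (r := rank isP1 T F) (fun t ht => ?_) s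
  obtain ⟨htW, htFD⟩ := ht
  have htF : t ∉ F := fun h => htFD (Or.inl (Or.inl h))
  have htD : t ∉ X ∪ Y := fun h => htFD (h.elim (fun hX => Or.inl (Or.inr hX)) Or.inr)
  simp only [sinkT, if_neg htD]
  split_ifs with hP1
  · exact rank_lt_of_isP1 htW htF hP1 _
  · exact hgreedy t hP1 htW htF

/-- starting from `s ∈ Win₂(G,F)`, no play of the modified game
`G_{X,Y}` that is consistent with any P1 strategy and a greedy (rank-reducing)
winning strategy of P2 can remain forever in `Win₂(G,F) \ (F ∪ X ∪ Y)`;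
hence a P1 strategy avoiding `F` must force a visit to `X ∪ Y`. -/
theorem must_visit_decoys [Fintype S]
    (isP1 : S → Prop) (T : S → A → S) (F X Y : Set S)
    (hX : X ⊆ win2 isP1 T F \ F) (hY : Y ⊆ win2 isP1 T F \ F)
    (hXY : Disjoint X Y)
    (π₁ π₂ : S → A)
    (hgreedy : ∀ s, ¬ isP1 s → s ∈ win2 isP1 T F → s ∉ F →
      rank isP1 T F (T s (π₂ s)) < rank isP1 T F s)
    (s : S) (hs : s ∈ win2 isP1 T F) :
    ¬ ∀ n, (fun t => sinkT T (X ∪ Y) t (if isP1 t then π₁ t else π₂ t))^[n] s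
        ∈ win2 isP1 T F \ (F ∪ X ∪ Y) :=
  must_visit_decoys_general isP1 T F X Y π₁ π₂ hgreedy s
end
end

section
/- In the hypergame restricted to subjectively rationalizable greedy actions, every sure winning strategy of player 1 for the reachability objective X ∪ Y yields, in the true game with X ∪ Y as sinks, a strategy guaranteeing that no play starting from a state in P1's hypergame winning region ever visits F. -/
open scoped Classical
noncomputable section

variable {S A : Type*}

/-- Level sets of player 1's attractor of the decoys `X ∪ Y` in the hypergame
`Ĥ(X,Y)`: player 1 keeps all actions, while player 2 is restricted to its
subjectively rationalizable (rank-reducing with respect to the perceived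
target `F ∪ Y`) actions. -/
def dlev (isP1 : S → Prop) (T : S → A → S) (F X Y : Set S) : ℕ → Set S
  | 0 => X ∪ Y
  | n + 1 => dlev isP1 T F X Y n ∪
      {s | isP1 s ∧ ∃ a, T s a ∈ dlev isP1 T F X Y n} ∪
      {s | ¬ isP1 s ∧
        (∃ a, rank isP1 T (F ∪ Y) (T s a) < rank isP1 T (F ∪ Y) s) ∧
        (∀ a, rank isP1 T (F ∪ Y) (T s a) < rank isP1 T (F ∪ Y) s →
          T s a ∈ dlev isP1 T F X Y n)}

/-- Player 1's stealthy deceptive sure-winning region: attractor of `X ∪ Y`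
in the hypergame `Ĥ(X,Y)`. -/
def dswin (isP1 : S → Prop) (T : S → A → S) (F X Y : Set S) : Set S :=
  ⋃ n, dlev isP1 T F X Y n

/-!
The sink states `X ∪ Y` are fixed by the play's step map by construction, and the states of `F`
are fixed because `F` is absorbing in `G` and disjoint from `X ∪ Y`. An orbit of a map that
reaches a fixed point stays there, so it can reach at most one fixed point; since every play
from the hypergame winning region reaches `X ∪ Y`, it can never meet `F`.
-/

open Function

theorem iterate_eq_iterate_of_isFixedPt {α : Type*} {f : α → α} {x : α} {m n : ℕ}
    (hm : IsFixedPt f (f^[m] x)) (hn : IsFixedPt f (f^[n] x)) : f^[m] x = f^[n] x := by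
  wlog hmn : m ≤ n generalizing m n
  · exact (this hn hm (le_of_not_ge hmn)).symm
  obtain ⟨k, rfl⟩ := Nat.exists_eq_add_of_le hmn
  rw [add_comm, iterate_add_apply, (hm.iterate k).eq]

theorem iterate_notMem_of_isFixedPt_of_disjoint {α : Type*} {f : α → α} {P Q : Set α}
    (hPQ : Disjoint P Q) (hP : ∀ p ∈ P, IsFixedPt f p) (hQ : ∀ q ∈ Q, IsFixedPt f q)
    {x : α} {m : ℕ} (hm : f^[m] x ∈ Q) (n : ℕ) : f^[n] x ∉ P := fun hn =>
  hPQ.ne_of_mem hn hm (iterate_eq_iterate_of_isFixedPt (hP _ hn) (hQ _ hm))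

theorem sinkT_of_mem {T : S → A → S} {D : Set S} {s : S} (hs : s ∈ D) (a : A) :
    sinkT T D s a = s :=
  if_pos hs

theorem sinkT_of_notMem {T : S → A → S} {D : Set S} {s : S} (hs : s ∉ D) (a : A) :
    sinkT T D s a = T s a :=
  if_neg hs

theorem hypergame_winning_avoids_F_general
    (isP1 : S → Prop) (T : S → A → S) (F X Y : Set S)
    (hX : X ⊆ win2 isP1 T F \ F) (hY : Y ⊆ win2 isP1 T F \ F)
    (hF : ∀ s ∈ F, ∀ a, T s a = s)
    (π₁ : S → A)
    (hwin : ∀ s ∈ dswin isP1 T F X Y, ∀ π₂ : S → A,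
      (∀ t, ¬ isP1 t → t ∈ win2 isP1 T F → t ∉ F ∪ Y →
        rank isP1 T (F ∪ Y) (T t (π₂ t)) < rank isP1 T (F ∪ Y) t) →
      ∃ n, (fun t => sinkT T (X ∪ Y) t (if isP1 t then π₁ t else π₂ t))^[n] s
        ∈ X ∪ Y) :
    ∀ s ∈ dswin isP1 T F X Y, ∀ π₂ : S → A,
      (∀ t, ¬ isP1 t → t ∈ win2 isP1 T F → t ∉ F ∪ Y →
        rank isP1 T (F ∪ Y) (T t (π₂ t)) < rank isP1 T (F ∪ Y) t) →
      ∀ n, (fun t => sinkT T (X ∪ Y) t (if isP1 t then π₁ t else π₂ t))^[n] s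
        ∉ F := by
  intro s hs π₂ hπ₂
  obtain ⟨m, hm⟩ := hwin s hs π₂ hπ₂
  have hFD : Disjoint F (X ∪ Y) :=
    Set.disjoint_union_right.2
      ⟨Set.disjoint_right.2 fun _ hx => (hX hx).2, Set.disjoint_right.2 fun _ hy => (hY hy).2⟩
  refine iterate_notMem_of_isFixedPt_of_disjoint hFD (fun t ht => ?_)
    (fun t ht => sinkT_of_mem ht _) hm
  exact (sinkT_of_notMem (hFD.notMem_of_mem_left ht) _).trans (hF t ht _)

/-- if P1's strategy `π₁` is sure winning in the hypergame
(every play from P1's hypergame winning region, with P2 restricted to its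
greedy, subjectively rationalizable rank-reducing actions w.r.t. `F ∪ Y`,
reaches the decoys `X ∪ Y` in the true game `G_{X,Y}`), then every such play
never visits `F`. -/
theorem hypergame_winning_avoids_F [Fintype S]
    (isP1 : S → Prop) (T : S → A → S) (F X Y : Set S)
    (hX : X ⊆ win2 isP1 T F \ F) (hY : Y ⊆ win2 isP1 T F \ F)
    (hXY : Disjoint X Y)
    (hF : ∀ s ∈ F, ∀ a, T s a = s)
    (π₁ : S → A)
    (hwin : ∀ s ∈ dswin isP1 T F X Y, ∀ π₂ : S → A,
      (∀ t, ¬ isP1 t → t ∈ win2 isP1 T F → t ∉ F ∪ Y →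
        rank isP1 T (F ∪ Y) (T t (π₂ t)) < rank isP1 T (F ∪ Y) t) →
      ∃ n, (fun t => sinkT T (X ∪ Y) t (if isP1 t then π₁ t else π₂ t))^[n] s
        ∈ X ∪ Y) :
    ∀ s ∈ dswin isP1 T F X Y, ∀ π₂ : S → A,
      (∀ t, ¬ isP1 t → t ∈ win2 isP1 T F → t ∉ F ∪ Y →
        rank isP1 T (F ∪ Y) (T t (π₂ t)) < rank isP1 T (F ∪ Y) t) →
      ∀ n, (fun t => sinkT T (X ∪ Y) t (if isP1 t then π₁ t else π₂ t))^[n] s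
        ∉ F :=
  hypergame_winning_avoids_F_general isP1 T F X Y hX hY hF π₁ hwin
end
end
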